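/- arXiv:2008.12705 — 4 statements merged into one kernel-verified Lean document; each statement's English description precedes it below -/
import Mathlib

section
/- For every T in B(H) and all real α, β ≥ 0 with (α,β) ≠ (0,0), one has max{√(α+β)/2, √β} · ‖T‖ ≤ ‖T‖_{α,β} ≤ √(α+β) · ‖T‖. -/
open ContinuousLinearMap

variable {H : Type*} [NormedAddCommGroup H] [InnerProductSpace ℂ H] [CompleteSpace H]

/-- The numerical radius `w(T) = sup {|⟨Tx,x⟩| : ‖x‖ = 1}`. -/
noncomputable def numRad (T : H →L[ℂ] H) : ℝ :=
  sSup {r : ℝ | ∃ x : H, ‖x‖ = 1 ∧ r = ‖(inner ℂ (T x) x : ℂ)‖}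

/-- The `(α,β)`-norm `‖T‖_{α,β} = sup {√(α|⟨Tx,x⟩|² + β‖Tx‖²) : ‖x‖ = 1}`. -/
noncomputable def abNorm (α β : ℝ) (T : H →L[ℂ] H) : ℝ :=
  sSup {r : ℝ | ∃ x : H, ‖x‖ = 1 ∧
    r = Real.sqrt (α * ‖(inner ℂ (T x) x : ℂ)‖ ^ 2 + β * ‖T x‖ ^ 2)}

/-!
Since `|⟨Tx,x⟩| ≤ ‖Tx‖ ≤ ‖T‖` on unit vectors, the quantity under the root lies between
`(α+β)|⟨Tx,x⟩|²` (and `β‖Tx‖²`) and `(α+β)‖T‖²`. Taking suprema gives the upper bound,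
`√β ‖T‖ ≤ ‖T‖_{α,β}` and `√(α+β) w(T) ≤ ‖T‖_{α,β}`; the remaining bound follows from the
classical `‖T‖ ≤ 2 w(T)`, a consequence of the complex polarization identity.
-/

open scoped InnerProductSpace

section

variable {E : Type*} [NormedAddCommGroup E] [InnerProductSpace ℂ E]

lemma norm_inner_map_smul_self (T : E →L[ℂ] E) (c : ℂ) (x : E) :
    ‖⟪T (c • x), c • x⟫_ℂ‖ = ‖c‖ ^ 2 * ‖⟪T x, x⟫_ℂ‖ := by
  rw [map_smul, inner_smul_left, inner_smul_right, norm_mul, norm_mul, Complex.norm_conj]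
  ring

lemma norm_inner_map_self_le_mul_sq_of_unit {T : E →L[ℂ] E} {K : ℝ}
    (hK : ∀ x : E, ‖x‖ = 1 → ‖⟪T x, x⟫_ℂ‖ ≤ K) (u : E) :
    ‖⟪T u, u⟫_ℂ‖ ≤ K * ‖u‖ ^ 2 := by
  rcases eq_or_ne u 0 with rfl | hu
  · simp
  have hunit := hK _ (norm_smul_inv_norm (𝕜 := ℂ) hu)
  rw [norm_inner_map_smul_self, norm_inv, RCLike.norm_ofReal, abs_norm, inv_pow,
    inv_mul_le_iff₀ (by positivity)] at hunit
  linarith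

lemma norm_inner_map_le_of_norm_inner_map_self_le {T : E →L[ℂ] E} {K : ℝ}
    (hK : ∀ u : E, ‖⟪T u, u⟫_ℂ‖ ≤ K * ‖u‖ ^ 2) (x y : E) :
    ‖⟪T x, y⟫_ℂ‖ ≤ K * (‖x‖ ^ 2 + ‖y‖ ^ 2) := by
  have hpol : (4 : ℂ) * ⟪T x, y⟫_ℂ =
      ⟪T (x + y), x + y⟫_ℂ - ⟪T (x - y), x - y⟫_ℂ
        - Complex.I * ⟪T (x + Complex.I • y), x + Complex.I • y⟫_ℂ
        + Complex.I * ⟪T (x - Complex.I • y), x - Complex.I • y⟫_ℂ := by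
    rw [← coe_coe, inner_map_polarization']
    simp only [coe_coe]
    ring
  have htri : 4 * ‖⟪T x, y⟫_ℂ‖ ≤
      ‖⟪T (x + y), x + y⟫_ℂ‖ + ‖⟪T (x - y), x - y⟫_ℂ‖
        + ‖⟪T (x + Complex.I • y), x + Complex.I • y⟫_ℂ‖
        + ‖⟪T (x - Complex.I • y), x - Complex.I • y⟫_ℂ‖ := by
    have h := congrArg norm hpol
    rw [norm_mul, RCLike.norm_ofNat] at h
    rw [h]
    refine (norm_add_le_of_le (norm_sub_le_of_le (norm_sub_le _ _) le_rfl) le_rfl).trans ?_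
    simp only [norm_mul, Complex.norm_I, one_mul, le_refl]
  have hIy : ‖Complex.I • y‖ = ‖y‖ := by rw [norm_smul, Complex.norm_I, one_mul]
  have hpar₁ := parallelogram_law_with_norm ℂ x y
  have hpar₂ := parallelogram_law_with_norm ℂ x (Complex.I • y)
  rw [hIy] at hpar₂
  linear_combination (htri + hK (x + y) + hK (x - y) + hK (x + Complex.I • y)
    + hK (x - Complex.I • y) + K * hpar₁ + K * hpar₂) / 4

lemma opNorm_le_two_mul_of_norm_inner_map_self_le {T : E →L[ℂ] E} {K : ℝ} (hK₀ : 0 ≤ K)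
    (hK : ∀ x : E, ‖x‖ = 1 → ‖⟪T x, x⟫_ℂ‖ ≤ K) : ‖T‖ ≤ 2 * K := by
  refine opNorm_le_of_unit_norm (by linarith) fun x hx => ?_
  rcases eq_or_ne (T x) 0 with hTx | hTx
  · rw [hTx, norm_zero]
    linarith
  have hy : ‖(‖T x‖⁻¹ : ℂ) • T x‖ = 1 := norm_smul_inv_norm hTx
  have hpol := norm_inner_map_le_of_norm_inner_map_self_le
    (norm_inner_map_self_le_mul_sq_of_unit hK) x ((‖T x‖⁻¹ : ℂ) • T x)
  rw [hy, hx, inner_smul_right, inner_self_eq_norm_sq_to_K] at hpol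
  simp only [Complex.coe_algebraMap, sq, ne_eq, Complex.ofReal_eq_zero, norm_eq_zero, hTx,
    not_false_eq_true, inv_mul_cancel_left₀, Complex.norm_real, norm_norm] at hpol
  linarith

lemma norm_inner_map_self_le_norm_apply (T : E →L[ℂ] E) {x : E} (hx : ‖x‖ = 1) :
    ‖⟪T x, x⟫_ℂ‖ ≤ ‖T x‖ := by
  simpa [hx] using norm_inner_le_norm (𝕜 := ℂ) (T x) x

lemma norm_inner_map_self_le_numRad (T : E →L[ℂ] E) {x : E} (hx : ‖x‖ = 1) :
    ‖⟪T x, x⟫_ℂ‖ ≤ numRad T := by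
  refine le_csSup ⟨‖T‖, ?_⟩ ⟨x, hx, rfl⟩
  rintro _ ⟨y, hy, rfl⟩
  exact (norm_inner_map_self_le_norm_apply T hy).trans (T.unit_le_opNorm y hy.le)

lemma numRad_nonneg (T : E →L[ℂ] E) : 0 ≤ numRad T :=
  Real.sSup_nonneg (by rintro _ ⟨x, -, rfl⟩; exact norm_nonneg _)

lemma opNorm_le_two_mul_numRad (T : E →L[ℂ] E) : ‖T‖ ≤ 2 * numRad T :=
  opNorm_le_two_mul_of_norm_inner_map_self_le (numRad_nonneg T)
    fun _ hx => norm_inner_map_self_le_numRad T hx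

variable {α β : ℝ}

lemma abNorm_nonneg (T : E →L[ℂ] E) : 0 ≤ abNorm α β T :=
  Real.sSup_nonneg (by rintro _ ⟨x, -, rfl⟩; exact Real.sqrt_nonneg _)

lemma sqrt_abNorm_term_le (hα : 0 ≤ α) (hβ : 0 ≤ β) (T : E →L[ℂ] E) {x : E} (hx : ‖x‖ = 1) :
    √(α * ‖⟪T x, x⟫_ℂ‖ ^ 2 + β * ‖T x‖ ^ 2) ≤ √(α + β) * ‖T‖ := by
  have hTx : ‖T x‖ ≤ ‖T‖ := T.unit_le_opNorm x hx.le
  have hinner : ‖⟪T x, x⟫_ℂ‖ ≤ ‖T‖ := (norm_inner_map_self_le_norm_apply T hx).trans hTx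
  rw [← Real.sqrt_sq (norm_nonneg T), ← Real.sqrt_mul (by positivity)]
  gcongr
  linarith [mul_le_mul_of_nonneg_left (pow_le_pow_left₀ (norm_nonneg _) hinner 2) hα,
    mul_le_mul_of_nonneg_left (pow_le_pow_left₀ (norm_nonneg _) hTx 2) hβ]

lemma abNorm_le_sqrt_add_mul_opNorm (hα : 0 ≤ α) (hβ : 0 ≤ β) (T : E →L[ℂ] E) :
    abNorm α β T ≤ √(α + β) * ‖T‖ :=
  Real.sSup_le (by rintro _ ⟨x, hx, rfl⟩; exact sqrt_abNorm_term_le hα hβ T hx) (by positivity)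

lemma sqrt_abNorm_term_le_abNorm (hα : 0 ≤ α) (hβ : 0 ≤ β) (T : E →L[ℂ] E) {x : E}
    (hx : ‖x‖ = 1) : √(α * ‖⟪T x, x⟫_ℂ‖ ^ 2 + β * ‖T x‖ ^ 2) ≤ abNorm α β T := by
  refine le_csSup ⟨√(α + β) * ‖T‖, ?_⟩ ⟨x, hx, rfl⟩
  rintro _ ⟨y, hy, rfl⟩
  exact sqrt_abNorm_term_le hα hβ T hy

lemma sqrt_mul_numRad_le_abNorm (hα : 0 ≤ α) (hβ : 0 ≤ β) (T : E →L[ℂ] E) :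
    √(α + β) * numRad T ≤ abNorm α β T := by
  rw [numRad, ← smul_eq_mul, ← Real.sSup_smul_of_nonneg (Real.sqrt_nonneg _)]
  refine Real.sSup_le ?_ (abNorm_nonneg T)
  rintro _ ⟨_, ⟨x, hx, rfl⟩, rfl⟩
  have hinner := norm_inner_map_self_le_norm_apply T hx
  calc √(α + β) • ‖⟪T x, x⟫_ℂ‖ = √((α + β) * ‖⟪T x, x⟫_ℂ‖ ^ 2) := by
        rw [Real.sqrt_mul (by positivity), Real.sqrt_sq (norm_nonneg _), smul_eq_mul]
    _ ≤ √(α * ‖⟪T x, x⟫_ℂ‖ ^ 2 + β * ‖T x‖ ^ 2) := by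
        gcongr
        linarith [mul_le_mul_of_nonneg_left (pow_le_pow_left₀ (norm_nonneg _) hinner 2) hβ]
    _ ≤ abNorm α β T := sqrt_abNorm_term_le_abNorm hα hβ T hx

lemma sqrt_mul_opNorm_le_abNorm (hα : 0 ≤ α) (hβ : 0 ≤ β) (T : E →L[ℂ] E) :
    √β * ‖T‖ ≤ abNorm α β T := by
  have hnorm : ‖(√β : ℂ) • T‖ = √β * ‖T‖ := by
    rw [norm_smul, Complex.norm_real, Real.norm_of_nonneg (Real.sqrt_nonneg _)]
  rw [← hnorm]
  refine opNorm_le_of_unit_norm (abNorm_nonneg T) fun x hx => ?_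
  calc ‖((√β : ℂ) • T) x‖ = √(β * ‖T x‖ ^ 2) := by
        rw [smul_apply, norm_smul, Complex.norm_real,
          Real.norm_of_nonneg (Real.sqrt_nonneg _), Real.sqrt_mul hβ, Real.sqrt_sq (norm_nonneg _)]
    _ ≤ √(α * ‖⟪T x, x⟫_ℂ‖ ^ 2 + β * ‖T x‖ ^ 2) :=
        Real.sqrt_le_sqrt (le_add_of_nonneg_left (by positivity))
    _ ≤ abNorm α β T := sqrt_abNorm_term_le_abNorm hα hβ T hx

end

theorem abNorm_opNorm_bounds_general (T : H →L[ℂ] H) (α β : ℝ) (hα : 0 ≤ α) (hβ : 0 ≤ β) :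
    max (Real.sqrt (α + β) / 2) (Real.sqrt β) * ‖T‖ ≤ abNorm α β T ∧
      abNorm α β T ≤ Real.sqrt (α + β) * ‖T‖ := by
  refine ⟨?_, abNorm_le_sqrt_add_mul_opNorm hα hβ T⟩
  rw [max_mul_of_nonneg _ _ (norm_nonneg T), max_le_iff]
  refine ⟨?_, sqrt_mul_opNorm_le_abNorm hα hβ T⟩
  calc √(α + β) / 2 * ‖T‖ ≤ √(α + β) / 2 * (2 * numRad T) := by
        gcongr
        exact opNorm_le_two_mul_numRad T
    _ = √(α + β) * numRad T := by ring
    _ ≤ abNorm α β T := sqrt_mul_numRad_le_abNorm hα hβ T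

/-- `max{√(α+β)/2, √β}·‖T‖ ≤ ‖T‖_{α,β} ≤ √(α+β)·‖T‖`. -/
theorem abNorm_opNorm_bounds (T : H →L[ℂ] H) (α β : ℝ) (hα : 0 ≤ α) (hβ : 0 ≤ β)
    (hαβ : (α, β) ≠ (0, 0)) :
    max (Real.sqrt (α + β) / 2) (Real.sqrt β) * ‖T‖ ≤ abNorm α β T ∧
      abNorm α β T ≤ Real.sqrt (α + β) * ‖T‖ :=
  abNorm_opNorm_bounds_general T α β hα hβ
end

section
/- Let T ∈ B(H) and let α, β ≥ 0 with (α,β) ≠ (0,0). Then ‖T‖_{α,β}² ≥ max{ α·w(T)² + β·c(T*T), α·c(T)² + β·‖T‖², 2√(αβ)·w(T)·√(c(T*T)), 2√(αβ)·c(T)·‖T‖ }. -/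
/-!
For a unit vector `x` put `a = |⟨Tx,x⟩|` and `b = ‖Tx‖`. Then `c(T) ≤ a`, `c(T*T) ≤ b²` and
`α a² + β b² ≤ ‖T‖²_{α,β}`, and by AM-GM also `2√(αβ) a b ≤ α a² + β b²`. So each of the four
quantities, viewed as a continuous function of `a` or of `b`, is bounded by `‖T‖²_{α,β}` at every
unit vector; the bound passes to `w(T) = sup a` and `‖T‖ = sup b` because a supremum lies in the
closure of the set it is taken over.
-/

open ContinuousLinearMap

variable {H : Type*} [NormedAddCommGroup H] [InnerProductSpace ℂ H] [CompleteSpace H]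

/-- The Crawford number `c(T) = inf {|⟨Tx,x⟩| : ‖x‖ = 1}`. -/
noncomputable def crawford (T : H →L[ℂ] H) : ℝ :=
  sInf {r : ℝ | ∃ x : H, ‖x‖ = 1 ∧ r = ‖(inner ℂ (T x) x : ℂ)‖}


theorem Continuous.map_csSup_le {S : Set ℝ} {φ : ℝ → ℝ} (hφ : Continuous φ) (hS : S.Nonempty)
    (hbdd : BddAbove S) {M : ℝ} (h : ∀ s ∈ S, φ s ≤ M) : φ (sSup S) ≤ M :=
  closure_minimal h (isClosed_le hφ continuous_const) (csSup_mem_closure hS hbdd)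

theorem two_mul_sqrt_mul_mul_le_add_sq {α β : ℝ} (hα : 0 ≤ α) (hβ : 0 ≤ β) (a b : ℝ) :
    2 * √(α * β) * a * b ≤ α * a ^ 2 + β * b ^ 2 := by
  have h := two_mul_le_add_sq (√α * a) (√β * b)
  rw [mul_pow, mul_pow, Real.sq_sqrt hα, Real.sq_sqrt hβ] at h
  rw [Real.sqrt_mul hα]
  linarith

section

variable {E : Type*} [NormedAddCommGroup E] [InnerProductSpace ℂ E] (T : E →L[ℂ] E) {x : E}

theorem norm_inner_apply_self_le_opNorm (hx : ‖x‖ = 1) : ‖inner ℂ (T x) x‖ ≤ ‖T‖ :=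
  (norm_inner_le_norm _ _).trans <| by simpa [hx] using T.le_opNorm x

theorem bddAbove_norm_inner_apply_self :
    BddAbove {r : ℝ | ∃ x : E, ‖x‖ = 1 ∧ r = ‖inner ℂ (T x) x‖} :=
  ⟨‖T‖, by rintro r ⟨y, hy, rfl⟩; exact norm_inner_apply_self_le_opNorm T hy⟩

theorem crawford_le_norm_inner_apply_self (hx : ‖x‖ = 1) : crawford T ≤ ‖inner ℂ (T x) x‖ :=
  csInf_le ⟨0, by rintro r ⟨y, -, rfl⟩; positivity⟩ ⟨x, hx, rfl⟩

theorem crawford_nonneg : 0 ≤ crawford T :=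
  Real.sInf_nonneg <| by rintro r ⟨y, -, rfl⟩; positivity

theorem crawford_adjoint_mul_self_le_sq [CompleteSpace E] (hx : ‖x‖ = 1) :
    crawford (adjoint T * T) ≤ ‖T x‖ ^ 2 := by
  simpa [adjoint_inner_left, inner_self_eq_norm_sq_to_K, norm_pow]
    using crawford_le_norm_inner_apply_self (adjoint T * T) hx

theorem le_abNorm_sq {α β : ℝ} (hα : 0 ≤ α) (hβ : 0 ≤ β) (hx : ‖x‖ = 1) :
    α * ‖inner ℂ (T x) x‖ ^ 2 + β * ‖T x‖ ^ 2 ≤ abNorm α β T ^ 2 := by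
  have hbdd : BddAbove {r : ℝ | ∃ x : E, ‖x‖ = 1 ∧
      r = √(α * ‖inner ℂ (T x) x‖ ^ 2 + β * ‖T x‖ ^ 2)} := by
    refine ⟨√(α * ‖T‖ ^ 2 + β * ‖T‖ ^ 2), ?_⟩
    rintro r ⟨y, hy, rfl⟩
    gcongr
    · exact norm_inner_apply_self_le_opNorm T hy
    · exact T.unit_le_opNorm y hy.le
  exact (Real.sqrt_le_iff.1 (le_csSup hbdd ⟨x, hx, rfl⟩)).2

variable [Nontrivial E] {φ : ℝ → ℝ} {M : ℝ}

theorem map_numRad_le (hφ : Continuous φ)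
    (h : ∀ x : E, ‖x‖ = 1 → φ ‖inner ℂ (T x) x‖ ≤ M) : φ (numRad T) ≤ M := by
  obtain ⟨x₀, hx₀⟩ := exists_norm_eq E zero_le_one
  have hne : {r : ℝ | ∃ x : E, ‖x‖ = 1 ∧ r = ‖inner ℂ (T x) x‖}.Nonempty := ⟨_, x₀, hx₀, rfl⟩
  refine hφ.map_csSup_le hne (bddAbove_norm_inner_apply_self T) ?_
  rintro r ⟨x, hx, rfl⟩
  exact h x hx

theorem map_opNorm_le (hφ : Continuous φ) (h : ∀ x : E, ‖x‖ = 1 → φ ‖T x‖ ≤ M) :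
    φ ‖T‖ ≤ M := by
  rw [← T.sSup_sphere_eq_norm]
  refine hφ.map_csSup_le ((NormedSpace.sphere_nonempty.2 zero_le_one).image _) ?_ ?_
  · refine ⟨‖T‖, ?_⟩
    rintro r ⟨y, hy, rfl⟩
    exact T.unit_le_opNorm y (mem_sphere_zero_iff_norm.1 hy).le
  · rintro r ⟨y, hy, rfl⟩
    exact h y (mem_sphere_zero_iff_norm.1 hy)

end

theorem abNorm_sq_ge_max_general (T : H →L[ℂ] H) (α β : ℝ) (hα : 0 ≤ α) (hβ : 0 ≤ β) :
    abNorm α β T ^ 2 ≥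
      max (max (α * numRad T ^ 2 + β * crawford (adjoint T * T))
               (α * crawford T ^ 2 + β * ‖T‖ ^ 2))
          (max (2 * Real.sqrt (α * β) * numRad T * Real.sqrt (crawford (adjoint T * T)))
               (2 * Real.sqrt (α * β) * crawford T * ‖T‖)) := by
  rcases subsingleton_or_nontrivial H with hH | hH
  · -- no unit vectors: every `sSup`/`sInf` is taken over `∅`, hence `0`
    have : ∀ x : H, ‖x‖ ≠ 1 := fun x => by simp [Subsingleton.elim x 0]
    simp [numRad, crawford, abNorm, this]
  have hc := crawford_nonneg T
  have hcT x (hx : ‖x‖ = 1) : √(crawford (adjoint T * T)) ≤ ‖T x‖ :=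
    Real.sqrt_le_left (norm_nonneg _) |>.2 (crawford_adjoint_mul_self_le_sq T hx)
  refine max_le (max_le ?_ ?_) (max_le ?_ ?_)
  · refine map_numRad_le T (φ := fun t => α * t ^ 2 + _) (by fun_prop) fun x hx => ?_
    grw [crawford_adjoint_mul_self_le_sq T hx]
    exact le_abNorm_sq T hα hβ hx
  · refine map_opNorm_le T (φ := fun t => α * _ ^ 2 + β * t ^ 2) (by fun_prop) fun x hx => ?_
    grw [crawford_le_norm_inner_apply_self T hx]
    exact le_abNorm_sq T hα hβ hx
  · refine map_numRad_le T (φ := fun t => 2 * √(α * β) * t * _) (by fun_prop) fun x hx => ?_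
    grw [hcT x hx, two_mul_sqrt_mul_mul_le_add_sq hα hβ]
    exact le_abNorm_sq T hα hβ hx
  · refine map_opNorm_le T (φ := fun t => 2 * √(α * β) * _ * t) (by fun_prop) fun x hx => ?_
    grw [crawford_le_norm_inner_apply_self T hx, two_mul_sqrt_mul_mul_le_add_sq hα hβ]
    exact le_abNorm_sq T hα hβ hx

/-- Lower bounds for the `(α,β)`-norm in terms of `w(T)`, `c(T)`, `c(T*T)` and `‖T‖`. -/
theorem abNorm_sq_ge_max (T : H →L[ℂ] H) (α β : ℝ) (hα : 0 ≤ α) (hβ : 0 ≤ β)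
    (hαβ : (α, β) ≠ (0, 0)) :
    abNorm α β T ^ 2 ≥
      max (max (α * numRad T ^ 2 + β * crawford (adjoint T * T))
               (α * crawford T ^ 2 + β * ‖T‖ ^ 2))
          (max (2 * Real.sqrt (α * β) * numRad T * Real.sqrt (crawford (adjoint T * T)))
               (2 * Real.sqrt (α * β) * crawford T * ‖T‖)) :=
  abNorm_sq_ge_max_general T α β hα hβ
end

section
/- Let T ∈ B(H) and set A = (1/2)(|T| + |T*|), B = |T|, C = |T| − |T*|. If there exists a unit vector x ∈ H with ‖Ax‖ = ‖A‖, ‖Bx‖ = ‖B‖ and Cx = 0, then for all real α, β ≥ 0 with (α,β) ≠ (0,0), (1/(α+β)) · ‖ (α/4)(|T| + |T*|)² + β·|T|² ‖ = (1/4)·‖ |T| + |T*| ‖² = ‖T‖². -/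
open ContinuousLinearMap

variable {H : Type*} [NormedAddCommGroup H] [InnerProductSpace ℂ H] [CompleteSpace H]

/-- `|T|`, the positive square root of `T*T`. -/
noncomputable def absOp (T : H →L[ℂ] H) : H →L[ℂ] H := CFC.sqrt (adjoint T * T)


/-! Since `|T| x = |T*| x`, the attaining vector gives
`‖(|T| + |T*|) x‖ = 2 ‖|T| x‖ = 2 ‖T‖`, so `‖|T| + |T*|‖ = 2 ‖T‖`. For self-adjoint `A`, `B`
and `a, b ≥ 0` the triangle inequality bounds `‖a A² + b B²‖` by `a ‖A‖² + b ‖B‖²`, while the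
quadratic form of `a A² + b B²` at a unit vector `x` is `a ‖A x‖² + b ‖B x‖²`; when `x` attains
both norms the bound is reached. -/

section

variable {𝕜 E : Type*} [RCLike 𝕜] [NormedAddCommGroup E] [InnerProductSpace 𝕜 E]

open RCLike

lemma IsSelfAdjoint.re_inner_sq_apply_self [CompleteSpace E] {A : E →L[𝕜] E}
    (hA : IsSelfAdjoint A) (x : E) :
    re (inner 𝕜 ((A ^ 2) x) x) = ‖A x‖ ^ 2 := by
  rw [ContinuousLinearMap.apply_norm_sq_eq_inner_adjoint_left, hA.adjoint_eq, sq]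
  rfl

lemma norm_smul_sq_add_smul_sq_le (A B : E →L[𝕜] E) {a b : ℝ} (ha : 0 ≤ a) (hb : 0 ≤ b) :
    ‖(a : 𝕜) • A ^ 2 + (b : 𝕜) • B ^ 2‖ ≤ a * ‖A‖ ^ 2 + b * ‖B‖ ^ 2 := by
  calc _ ≤ ‖(a : 𝕜) • A ^ 2‖ + ‖(b : 𝕜) • B ^ 2‖ := norm_add_le _ _
    _ = a * ‖A ^ 2‖ + b * ‖B ^ 2‖ := by
      rw [norm_smul, norm_smul, norm_of_nonneg ha, norm_of_nonneg hb]
    _ ≤ a * ‖A‖ ^ 2 + b * ‖B‖ ^ 2 := by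
      gcongr <;> exact norm_pow_le' _ two_pos

lemma re_inner_apply_self_le_opNorm (M : E →L[𝕜] E) {x : E} (hx : ‖x‖ = 1) :
    re (inner 𝕜 (M x) x) ≤ ‖M‖ :=
  calc _ ≤ ‖M x‖ * ‖x‖ := re_inner_le_norm _ _
    _ ≤ ‖M‖ * ‖x‖ * ‖x‖ := by gcongr; exact M.le_opNorm x
    _ = ‖M‖ := by rw [hx, mul_one, mul_one]

lemma norm_smul_sq_add_smul_sq_eq_of_attained [CompleteSpace E] {A B : E →L[𝕜] E}
    (hA : IsSelfAdjoint A) (hB : IsSelfAdjoint B) {a b : ℝ} (ha : 0 ≤ a) (hb : 0 ≤ b) {x : E}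
    (hx : ‖x‖ = 1) (hAx : ‖A x‖ = ‖A‖) (hBx : ‖B x‖ = ‖B‖) :
    ‖(a : 𝕜) • A ^ 2 + (b : 𝕜) • B ^ 2‖ = a * ‖A‖ ^ 2 + b * ‖B‖ ^ 2 := by
  refine (norm_smul_sq_add_smul_sq_le A B ha hb).antisymm ?_
  have hform : re (inner 𝕜 (((a : 𝕜) • A ^ 2 + (b : 𝕜) • B ^ 2) x) x) =
      a * ‖A x‖ ^ 2 + b * ‖B x‖ ^ 2 := by
    simp only [add_apply, smul_apply, inner_add_left, inner_smul_left, map_add, conj_ofReal,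
      re_ofReal_mul, hA.re_inner_sq_apply_self, hB.re_inner_sq_apply_self]
  rw [← hAx, ← hBx, ← hform]
  exact re_inner_apply_self_le_opNorm _ hx

end

lemma absOp_isSelfAdjoint (T : H →L[ℂ] H) : IsSelfAdjoint (absOp T) :=
  (CFC.abs_nonneg T).isSelfAdjoint

lemma norm_absOp (T : H →L[ℂ] H) : ‖absOp T‖ = ‖T‖ := CFC.norm_abs

/-- If there is a common unit vector attaining the norms of `(1/2)(|T|+|T*|)` and `|T|`
and lying in the kernel of `|T| − |T*|`, then
`(1/(α+β))·‖(α/4)(|T|+|T*|)² + β|T|²‖ = (1/4)‖|T|+|T*|‖² = ‖T‖²` for all `α, β`. -/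
theorem abNorm_bound_eq_of_attained (T : H →L[ℂ] H)
    (hx : ∃ x : H, ‖x‖ = 1 ∧
      ‖(((1 / 2 : ℝ) : ℂ) • (absOp T + absOp (adjoint T))) x‖ =
        ‖((1 / 2 : ℝ) : ℂ) • (absOp T + absOp (adjoint T))‖ ∧
      ‖absOp T x‖ = ‖absOp T‖ ∧ (absOp T - absOp (adjoint T)) x = 0)
    (α β : ℝ) (hα : 0 ≤ α) (hβ : 0 ≤ β) (hαβ : (α, β) ≠ (0, 0)) :
    (1 / (α + β)) * ‖((α / 4 : ℝ) : ℂ) • (absOp T + absOp (adjoint T)) ^ 2 +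
        ((β : ℝ) : ℂ) • (absOp T ^ 2)‖ = (1 / 4) * ‖absOp T + absOp (adjoint T)‖ ^ 2 ∧
      (1 / 4) * ‖absOp T + absOp (adjoint T)‖ ^ 2 = ‖T‖ ^ 2 := by
  obtain ⟨x, hx1, hSx, hBx, hCx⟩ := hx
  set S := absOp T + absOp (adjoint T)
  rw [smul_apply, norm_smul, norm_smul, mul_right_inj' (by norm_num)] at hSx
  rw [sub_apply, sub_eq_zero] at hCx
  have hS : ‖S‖ = 2 * ‖T‖ := by
    rw [← hSx, add_apply, ← hCx, ← two_smul ℝ, norm_smul, hBx, norm_absOp, Real.norm_two]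
  have hαβ_pos : 0 < α + β := by
    contrapose! hαβ
    rw [Prod.mk.injEq]
    constructor <;> linarith
  have hM : ‖((α / 4 : ℝ) : ℂ) • S ^ 2 + ((β : ℝ) : ℂ) • absOp T ^ 2‖ =
      α / 4 * ‖S‖ ^ 2 + β * ‖absOp T‖ ^ 2 := norm_smul_sq_add_smul_sq_eq_of_attained
    ((absOp_isSelfAdjoint T).add (absOp_isSelfAdjoint (adjoint T))) (absOp_isSelfAdjoint T)
    (div_nonneg hα zero_le_four) hβ hx1 hSx hBx
  rw [hM, hS, norm_absOp]
  constructor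
  · field_simp
    ring
  · ring
end

section
/- Let T ∈ B(H) and let H₀ = { x ∈ H : ‖(T*T + TT*)x‖ = ‖T*T + TT*‖·‖x‖ }. Suppose H₀ contains a unit vector. Then for all real α, β ≥ 0 with (α,β) ≠ (0,0), w(T)² ≥ (α/(α+β)) · sup{ |⟨Tx,x⟩|² : x ∈ H₀, ‖x‖ = 1 } + (β/(4(α+β))) · ‖T*T + TT*‖; in particular w(T)² ≥ (1/4)·‖T*T + TT*‖. -/
/-!
Write `T = A + iB` with `A = ℜ T`, `B = ℑ T` self-adjoint, so that `T*T + TT* = 2(A² + B²)`.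
The norm of a self-adjoint operator is the supremum of its quadratic form, and
`Re ⟨Ax, x⟩ = Re ⟨Tx, x⟩`, `B = -ℜ(iT)`; hence `‖A‖, ‖B‖ ≤ w(T)` and `‖T*T + TT*‖ ≤ 4 w(T)²`.
Since also `|⟨Tx, x⟩|² ≤ w(T)²` for every unit vector, the convex combination is at most `w(T)²`.
-/

open ContinuousLinearMap

variable {H : Type*} [NormedAddCommGroup H] [InnerProductSpace ℂ H] [CompleteSpace H]

open ComplexStarModule RCLike

theorem LinearMap.IsSymmetric.opNorm_le_of_abs_re_inner_le {𝕜 E : Type*} [RCLike 𝕜]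
    [NormedAddCommGroup E] [InnerProductSpace 𝕜 E] {T : E →L[𝕜] E}
    (hT : (T : E →ₗ[𝕜] E).IsSymmetric) {M : ℝ} (hM : 0 ≤ M)
    (h : ∀ x, |re (inner 𝕜 (T x) x)| ≤ M * ‖x‖ ^ 2) : ‖T‖ ≤ M := by
  rw [T.norm_eq_iSup_rayleighQuotient hT]
  refine ciSup_le fun x => ?_
  rcases eq_or_ne x 0 with rfl | hx
  · simpa using hM
  rw [rayleighQuotient, reApplyInnerSelf_apply, abs_div, abs_sq, div_le_iff₀ (by positivity)]
  exact h x

namespace ContinuousLinearMap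

section NumericalRadius

variable {E : Type*} [NormedAddCommGroup E] [InnerProductSpace ℂ E] (T : E →L[ℂ] E)

theorem bddAbove_numRad_set :
    BddAbove {r : ℝ | ∃ x : E, ‖x‖ = 1 ∧ r = ‖(inner ℂ (T x) x : ℂ)‖} := by
  refine ⟨‖T‖, ?_⟩
  rintro _ ⟨x, hx, rfl⟩
  calc ‖(inner ℂ (T x) x : ℂ)‖ ≤ ‖T x‖ * ‖x‖ := norm_inner_le_norm _ _
    _ ≤ ‖T‖ * ‖x‖ * ‖x‖ := by gcongr; exact T.le_opNorm x
    _ = ‖T‖ := by simp [hx]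

theorem numRad_nonneg : 0 ≤ numRad T :=
  Real.sSup_nonneg fun _ ⟨_, _, hr⟩ => hr ▸ norm_nonneg _

theorem norm_inner_apply_self_le_numRad (x : E) :
    ‖(inner ℂ (T x) x : ℂ)‖ ≤ numRad T * ‖x‖ ^ 2 := by
  rcases eq_or_ne x 0 with rfl | hx
  · simp
  have hx' : ‖x‖ ≠ 0 := norm_ne_zero_iff.mpr hx
  set u : E := (‖x‖⁻¹ : ℂ) • x
  have hu : ‖u‖ = 1 := by simp [u, norm_smul, hx']
  have hscale : ‖(inner ℂ (T u) u : ℂ)‖ = ‖(inner ℂ (T x) x : ℂ)‖ / ‖x‖ ^ 2 := by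
    simp only [u, map_smul, inner_smul_left, inner_smul_right, norm_mul, RCLike.norm_conj,
      norm_inv, Complex.norm_real, norm_norm]
    field_simp
  have hu_le := le_csSup T.bddAbove_numRad_set ⟨u, hu, rfl⟩
  rwa [hscale, div_le_iff₀ (by positivity)] at hu_le

theorem sSup_norm_inner_sq_le_numRad_sq (P : E → Prop) :
    sSup {r : ℝ | ∃ x : E, ‖x‖ = 1 ∧ P x ∧ r = ‖(inner ℂ (T x) x : ℂ)‖ ^ 2} ≤ numRad T ^ 2 := by
  refine Real.sSup_le ?_ (sq_nonneg _)
  rintro _ ⟨x, hx, -, rfl⟩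
  have hx_le := T.norm_inner_apply_self_le_numRad x
  rw [hx, one_pow, mul_one] at hx_le
  gcongr

end NumericalRadius

variable (T : H →L[ℂ] H)

theorem re_inner_realPart_apply_self (x : H) :
    re (inner ℂ ((ℜ T : H →L[ℂ] H) x) x) = re (inner ℂ (T x) x) := by
  rw [realPart_apply_coe, smul_apply, add_apply, real_smul_eq_coe_smul (K := ℂ),
    inner_smul_left, inner_add_left, star_eq_adjoint, adjoint_inner_left, ← inner_conj_symm x]
  simp only [conj_ofReal, re_ofReal_mul, map_add, conj_re]
  ring

theorem norm_realPart_smul_le_numRad (c : ℂ) :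
    ‖(ℜ (c • T) : H →L[ℂ] H)‖ ≤ ‖c‖ * numRad T := by
  have := T.numRad_nonneg
  refine (ℜ (c • T)).2.isSymmetric.opNorm_le_of_abs_re_inner_le (by positivity) fun x => ?_
  calc |re (inner ℂ ((ℜ (c • T) : H →L[ℂ] H) x) x)| = |re (inner ℂ ((c • T) x) x)| := by
        rw [re_inner_realPart_apply_self]
    _ ≤ ‖(inner ℂ ((c • T) x) x : ℂ)‖ := abs_re_le_norm _
    _ = ‖c‖ * ‖(inner ℂ (T x) x : ℂ)‖ := by
        rw [smul_apply, inner_smul_left, norm_mul, RCLike.norm_conj]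
    _ ≤ ‖c‖ * (numRad T * ‖x‖ ^ 2) := by gcongr; exact T.norm_inner_apply_self_le_numRad x
    _ = ‖c‖ * numRad T * ‖x‖ ^ 2 := by ring

theorem norm_realPart_le_numRad : ‖(ℜ T : H →L[ℂ] H)‖ ≤ numRad T := by
  have h := T.norm_realPart_smul_le_numRad 1
  rwa [one_smul, norm_one, one_mul] at h

theorem norm_imaginaryPart_le_numRad : ‖(ℑ T : H →L[ℂ] H)‖ ≤ numRad T := by
  have h := T.norm_realPart_smul_le_numRad Complex.I
  rwa [realPart_I_smul, NegMemClass.coe_neg, norm_neg, Complex.norm_I, one_mul] at h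

theorem norm_adjoint_mul_self_add_self_mul_adjoint_le :
    ‖adjoint T * T + T * adjoint T‖ ≤ 4 * numRad T ^ 2 := by
  set A : H →L[ℂ] H := (ℜ T : H →L[ℂ] H)
  set B : H →L[ℂ] H := (ℑ T : H →L[ℂ] H)
  have := T.numRad_nonneg
  rw [← star_eq_adjoint, star_mul_self_add_self_mul_star]
  calc ‖2 • (A * A + B * B)‖ ≤ 2 * (‖A‖ * ‖A‖ + ‖B‖ * ‖B‖) := by
        grw [norm_nsmul_le, norm_add_le, norm_mul_le, norm_mul_le]
        norm_num
    _ ≤ 2 * (numRad T * numRad T + numRad T * numRad T) := by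
        gcongr
        exacts [T.norm_realPart_le_numRad, T.norm_realPart_le_numRad,
          T.norm_imaginaryPart_le_numRad, T.norm_imaginaryPart_le_numRad]
    _ = 4 * numRad T ^ 2 := by ring

end ContinuousLinearMap

theorem numRad_sq_ge_refined_general (T : H →L[ℂ] H)
    (α β : ℝ) (hα : 0 ≤ α) (hβ : 0 ≤ β) :
    numRad T ^ 2 ≥ (α / (α + β)) *
        sSup {r : ℝ | ∃ x : H, ‖x‖ = 1 ∧
          ‖(adjoint T * T + T * adjoint T) x‖ = ‖adjoint T * T + T * adjoint T‖ * ‖x‖ ∧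
          r = ‖(inner ℂ (T x) x : ℂ)‖ ^ 2} +
        (β / (4 * (α + β))) * ‖adjoint T * T + T * adjoint T‖ ∧
      numRad T ^ 2 ≥ (1 / 4) * ‖adjoint T * T + T * adjoint T‖ := by
  have hN := T.norm_adjoint_mul_self_add_self_mul_adjoint_le
  have hS := T.sSup_norm_inner_sq_le_numRad_sq
    fun x => ‖(adjoint T * T + T * adjoint T) x‖ = ‖adjoint T * T + T * adjoint T‖ * ‖x‖
  refine ⟨?_, by linarith⟩
  calc _ ≤ α / (α + β) * numRad T ^ 2 + β / (4 * (α + β)) * (4 * numRad T ^ 2) := by gcongr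
    _ = (α + β) / (α + β) * numRad T ^ 2 := by rw [mul_comm 4, ← div_div]; ring
    _ ≤ numRad T ^ 2 := mul_le_of_le_one_left (sq_nonneg _) (div_self_le_one _)

/-- Refined lower bound for the numerical radius via the set `H₀` of vectors attaining
the norm of `T*T + TT*`. -/
theorem numRad_sq_ge_refined (T : H →L[ℂ] H)
    (h0 : ∃ x : H, ‖x‖ = 1 ∧
      ‖(adjoint T * T + T * adjoint T) x‖ = ‖adjoint T * T + T * adjoint T‖ * ‖x‖)
    (α β : ℝ) (hα : 0 ≤ α) (hβ : 0 ≤ β) (hαβ : (α, β) ≠ (0, 0)) :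
    numRad T ^ 2 ≥ (α / (α + β)) *
        sSup {r : ℝ | ∃ x : H, ‖x‖ = 1 ∧
          ‖(adjoint T * T + T * adjoint T) x‖ = ‖adjoint T * T + T * adjoint T‖ * ‖x‖ ∧
          r = ‖(inner ℂ (T x) x : ℂ)‖ ^ 2} +
        (β / (4 * (α + β))) * ‖adjoint T * T + T * adjoint T‖ ∧
      numRad T ^ 2 ≥ (1 / 4) * ‖adjoint T * T + T * adjoint T‖ :=
  numRad_sq_ge_refined_general T α β hα hβ
end
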